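/- arXiv:1912.09044 — 2 statements merged into one kernel-verified Lean document; each statement's English description precedes it below -/
import Mathlib

section
/- Let p be a prime, F a field of characteristic p, G a finite group, and u an element of the center of G of order p^n. Then the Loewy length of the center of the group algebra satisfies LL(Z(F[G])) ≤ p^n · LL(Z(F[G/⟨u⟩])). -/
/-!
The projection `F[G] → F[G/⟨u⟩]` is surjective, so it maps centre into centre; call the induced
map `φ`. In a commutative Artinian ring the Jacobson radical is the nilradical, so `φ` sends
`J(Z(F[G]))` into `J(Z(F[G/⟨u⟩]))`, whence `J(Z(F[G]))^L ≤ ker φ` for `L = LL(Z(F[G/⟨u⟩]))`.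
The kernel of the projection is the ideal generated by the central element `u - 1`, and in
characteristic `p` we have `(u - 1)^(p^n) = u^(p^n) - 1 = 0`. So `(ker φ)^(p^n) = 0` and
`J(Z(F[G]))^(p^n * L) = 0`.
-/

/-- The Loewy length of a ring: the smallest positive `L` such that the `L`-th power of the
Jacobson radical is zero. -/
noncomputable def loewyLength (A : Type*) [Ring A] : ℕ :=
  sInf {L : ℕ | 0 < L ∧ ((⊥ : Ideal A).jacobson) ^ L = ⊥}

lemma loewyLength_le {A : Type*} [Ring A] {N : ℕ} (hN : 0 < N)
    (h : (⊥ : Ideal A).jacobson ^ N = ⊥) : loewyLength A ≤ N :=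
  Nat.sInf_le ⟨hN, h⟩

lemma loewyLength_pos_and_jacobson_pow_eq_bot (A : Type*) [Ring A] [IsArtinianRing A] :
    0 < loewyLength A ∧ (⊥ : Ideal A).jacobson ^ loewyLength A = ⊥ := by
  obtain ⟨k, hk⟩ := IsArtinianRing.isNilpotent_jacobson_bot (R := A)
  refine Nat.sInf_mem (s := {L | 0 < L ∧ _}) ⟨k + 1, k.succ_pos, ?_⟩
  rw [Submodule.pow_succ, show _ ^ k = ⊥ from hk, Submodule.bot_mul]

lemma jacobson_bot_le_comap {R S : Type*} [CommRing R] [IsArtinianRing R] [CommRing S]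
    (f : R →+* S) : (⊥ : Ideal R).jacobson ≤ (⊥ : Ideal S).jacobson.comap f :=
  calc (⊥ : Ideal R).jacobson = (⊥ : Ideal R).radical := IsArtinianRing.jacobson_eq_radical _
    _ ≤ ((⊥ : Ideal S).comap f).radical := Ideal.radical_mono bot_le
    _ = (⊥ : Ideal S).radical.comap f := (Ideal.comap_radical f _).symm
    _ ≤ (⊥ : Ideal S).jacobson.comap f := Ideal.comap_mono Ideal.radical_le_jacobson

lemma loewyLength_le_mul_of_ker_pow_eq_bot {R S : Type*} [CommRing R] [IsArtinianRing R]
    [CommRing S] [IsArtinianRing S] (f : R →+* S) {k : ℕ} (hk : 0 < k)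
    (hker : RingHom.ker f ^ k = ⊥) : loewyLength R ≤ k * loewyLength S := by
  obtain ⟨hpos, hpow⟩ := loewyLength_pos_and_jacobson_pow_eq_bot S
  refine loewyLength_le (Nat.mul_pos hk hpos) (le_bot_iff.mp ?_)
  calc (⊥ : Ideal R).jacobson ^ (k * loewyLength S)
      = ((⊥ : Ideal R).jacobson ^ loewyLength S) ^ k := by rw [mul_comm, pow_mul]
    _ ≤ (((⊥ : Ideal S).jacobson ^ loewyLength S).comap f) ^ k := by
      gcongr
      exact (Ideal.pow_right_mono (jacobson_bot_le_comap f) _).trans (Ideal.le_comap_pow f _)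
    _ = RingHom.ker f ^ k := by rw [hpow, RingHom.ker_eq_comap_bot]
    _ = ⊥ := hker

/-- `Ideal.span {x}` is the left ideal `A * x`; centrality of `x` is what lets a product of `m`
left multiples of `x` be rewritten as a left multiple of `x ^ m`. -/
lemma Ideal.comap_span_singleton_pow_le {R A : Type*} [CommSemiring R] [Semiring A]
    (f : R →+* A) {x : A} (hx : x ∈ Set.center A) (m : ℕ) :
    (Ideal.span {x}).comap f ^ m ≤ (Ideal.span {x ^ m}).comap f := by
  induction m with
  | zero => simp [Ideal.span_singleton_one]
  | succ m ih =>
    rw [pow_succ]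
    refine Ideal.mul_le.mpr fun a ha b hb => ?_
    obtain ⟨c, hc⟩ := Ideal.mem_span_singleton'.mp (ih ha)
    obtain ⟨d, hd⟩ := Ideal.mem_span_singleton'.mp hb
    refine Ideal.mem_span_singleton'.mpr ⟨c * d, ?_⟩
    have hdx : Commute d (x ^ m) := Commute.pow_right (Semigroup.mem_center_iff.mp hx d) m
    rw [map_mul, ← hc, ← hd, pow_succ, mul_assoc c, ← mul_assoc d, hdx.eq, mul_assoc, mul_assoc]

lemma Ideal.comap_span_singleton_pow_eq_bot {R A : Type*} [CommSemiring R] [Semiring A]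
    {f : R →+* A} (hf : Function.Injective f) {x : A} (hx : x ∈ Set.center A) {m : ℕ}
    (hxm : x ^ m = 0) : (Ideal.span {x}).comap f ^ m = ⊥ := by
  refine le_bot_iff.mp ((Ideal.comap_span_singleton_pow_le f hx m).trans ?_)
  rw [hxm, Ideal.span_singleton_zero, Ideal.comap_bot_of_injective f hf]

lemma map_mem_center_of_surjective {M N F : Type*} [Semigroup M] [Semigroup N] [FunLike F M N]
    [MulHomClass F M N] {f : F} (hf : Function.Surjective f) {z : M} (hz : z ∈ Set.center M) :
    f z ∈ Set.center N := by
  refine Semigroup.mem_center_iff.mpr fun b => ?_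
  obtain ⟨a, rfl⟩ := hf b
  rw [← map_mul, ← map_mul, Semigroup.mem_center_iff.mp hz a]

namespace MonoidAlgebra

variable {k G : Type*}

lemma mapDomain_surjective [Semiring k] {M N : Type*} {f : M → N} (hf : Function.Surjective f) :
    Function.Surjective (mapDomain (R := k) f) := fun y =>
  let ⟨x, hx⟩ := Finsupp.mapDomain_surjective hf y.coeff
  ⟨ofCoeff x, by ext; simp [mapDomain, hx]⟩

lemma single_mem_center [CommSemiring k] [Monoid G] {u : G} (hu : u ∈ Set.center G) (r : k) :
    single u r ∈ Set.center (MonoidAlgebra k G) := by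
  refine Semigroup.mem_center_iff.mpr fun a => ?_
  induction a using MonoidAlgebra.induction_linear with
  | zero => simp
  | add a b ha hb => rw [add_mul, mul_add, ha, hb]
  | single g c => rw [single_mul_single, single_mul_single, mul_comm c,
      Semigroup.mem_center_iff.mp hu g]

lemma single_sub_one_pow_eq_zero [CommRing k] (p : ℕ) [Fact p.Prime] [CharP k p] [Monoid G]
    {u : G} {n : ℕ} (hu : u ^ p ^ n = 1) : (single u (1 : k) - 1) ^ p ^ n = 0 := by
  have : CharP (MonoidAlgebra k G) p :=
    charP_of_injective_ringHom (f := singleOneRingHom) single_right_injective p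
  rw [sub_pow_char_pow_of_commute p n (Commute.one_right _), single_pow, one_pow, one_pow, hu,
    ← one_def, sub_self]

variable [Ring k] [Group G]

lemma single_sub_one_mem_of_mem_closure {I : Ideal (MonoidAlgebra k G)} {S : Set G}
    (hS : ∀ s ∈ S, single s (1 : k) - 1 ∈ I) {g : G} (hg : g ∈ Subgroup.closure S) :
    single g (1 : k) - 1 ∈ I := by
  induction hg using Subgroup.closure_induction with
  | mem s hs => exact hS s hs
  | one => simp [← one_def]
  | mul g h _ _ hg hh =>
    have : single (g * h) (1 : k) - 1 = single g 1 * (single h 1 - 1) + (single g 1 - 1) := by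
      rw [mul_sub, single_mul_single, mul_one, mul_one]; abel
    exact this ▸ I.add_mem (I.mul_mem_left _ hh) hg
  | inv g _ hg =>
    have : single g⁻¹ (1 : k) - 1 = -single g⁻¹ 1 * (single g 1 - 1) := by
      rw [neg_mul, mul_sub, single_mul_single, inv_mul_cancel, mul_one, mul_one, ← one_def,
        neg_sub]
    exact this ▸ I.mul_mem_left _ hg

lemma sub_mapDomain_out_mem {H : Subgroup G} {I : Ideal (MonoidAlgebra k G)}
    (hI : ∀ h ∈ H, single h (1 : k) - 1 ∈ I) (x : MonoidAlgebra k G) :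
    x - mapDomain Quotient.out (mapDomain (QuotientGroup.mk : G → G ⧸ H) x) ∈ I := by
  induction x using MonoidAlgebra.induction_linear with
  | zero => simp
  | add x y hx hy =>
    rw [mapDomain_add, mapDomain_add, add_sub_add_comm]
    exact I.add_mem hx hy
  | single g c =>
    obtain ⟨h, hh⟩ := QuotientGroup.mk_out_eq_mul H g
    have : single g c - single (g * h) c = -(single g c * (single (h : G) 1 - 1)) := by
      rw [mul_sub, single_mul_single, mul_one, mul_one, neg_sub]
    rw [mapDomain_single, mapDomain_single, hh, this]
    exact I.neg_mem (I.mul_mem_left _ (hI h h.2))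

lemma ker_mapDomainRingHom_mk'_le {H : Subgroup G} [H.Normal] {I : Ideal (MonoidAlgebra k G)}
    (hI : ∀ h ∈ H, single h (1 : k) - 1 ∈ I) :
    RingHom.ker (mapDomainRingHom k (QuotientGroup.mk' H)) ≤ I := fun x hx => by
  have hx0 : mapDomain (QuotientGroup.mk : G → G ⧸ H) x = 0 := hx
  simpa [hx0, mapDomain_zero] using sub_mapDomain_out_mem hI x

end MonoidAlgebra

theorem loewyLength_center_le_pow_mul (p n : ℕ) (hp : p.Prime)
    (F : Type*) [Field F] [CharP F p] (G : Type*) [Group G] [Fintype G]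
    (u : G) (hu : u ∈ Subgroup.center G) (hord : orderOf u = p ^ n)
    [hN : (Subgroup.zpowers u).Normal] :
    loewyLength (Subalgebra.center F (MonoidAlgebra F G)) ≤
      p ^ n * loewyLength (Subalgebra.center F
        (MonoidAlgebra F (G ⧸ Subgroup.zpowers u))) := by
  have : Fact p.Prime := ⟨hp⟩
  have := IsArtinianRing.of_finite F (Subalgebra.center F (MonoidAlgebra F G))
  have := IsArtinianRing.of_finite F
    (Subalgebra.center F (MonoidAlgebra F (G ⧸ Subgroup.zpowers u)))
  let π := MonoidAlgebra.mapDomainRingHom F (QuotientGroup.mk' (Subgroup.zpowers u))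
  have hπ : Function.Surjective π :=
    MonoidAlgebra.mapDomain_surjective (QuotientGroup.mk'_surjective _)
  let φ := π.restrict (Subalgebra.center F _) (Subalgebra.center F _)
    fun _ hz => map_mem_center_of_surjective hπ hz
  set X : MonoidAlgebra F G := MonoidAlgebra.single u 1 - 1
  have hX : X ∈ Set.center (MonoidAlgebra F G) :=
    (Subring.center _).sub_mem (MonoidAlgebra.single_mem_center hu 1)
      (Subring.center _).one_mem
  have hker : RingHom.ker φ ≤ (Ideal.span {X}).comap (Subalgebra.center F _).val := fun z hz =>
    MonoidAlgebra.ker_mapDomainRingHom_mk'_le (I := Ideal.span {X})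
      (fun _ hg => MonoidAlgebra.single_sub_one_mem_of_mem_closure
        (fun _ hs => Set.mem_singleton_iff.mp hs ▸ Ideal.mem_span_singleton_self X)
        (Subgroup.zpowers_eq_closure u ▸ hg))
      (congrArg Subtype.val hz)
  refine loewyLength_le_mul_of_ker_pow_eq_bot φ (pow_pos hp.pos n) (le_bot_iff.mp ?_)
  calc RingHom.ker φ ^ p ^ n ≤ (Ideal.span {X}).comap (Subalgebra.center F _).val ^ p ^ n :=
        Ideal.pow_right_mono hker _
    _ = ⊥ := Ideal.comap_span_singleton_pow_eq_bot Subtype.val_injective hX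
        (MonoidAlgebra.single_sub_one_pow_eq_zero p (hord ▸ pow_orderOf_eq_one u))
end

section
/- Let p be an odd prime and F a field of characteristic p. Let H be the group of upper unitriangular 3 × 3 matrices over ZMod p (the extraspecial group p_+^{1+2} of order p^3 and exponent p). Then the Loewy length of the group algebra F[H] equals 4p − 3; in particular, LL(F[H]) = 4p − 3 > 3p − 2 = ρ_p(3, 1). -/
/-- `ρ_p(m,n)`: if `n ≠ 0`, write `m = q·n + r` and set `ρ = q·(p^n − 1) + p^r`; if `n = 0`, set `ρ = 1`. -/
def rho (p m n : ℕ) : ℕ := if n = 0 then 1 else m / n * (p ^ n - 1) + p ^ (m % n)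

/-- The group of upper unitriangular `3 × 3` matrices over `ZMod p`: the subgroup of invertible
`3 × 3` matrices which are upper triangular with all diagonal entries equal to `1`. -/
def unitriangular3 (p : ℕ) : Subgroup (Matrix (Fin 3) (Fin 3) (ZMod p))ˣ where
  carrier := {M | (M : Matrix (Fin 3) (Fin 3) (ZMod p)).BlockTriangular id ∧
    ∀ i, (M : Matrix (Fin 3) (Fin 3) (ZMod p)) i i = 1}
  one_mem' := ⟨Matrix.blockTriangular_one, fun i => Matrix.one_apply_eq i⟩
  mul_mem' := by
    rintro M N ⟨hMt, hMd⟩ ⟨hNt, hNd⟩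
    refine ⟨by simpa using hMt.mul hNt, fun i => ?_⟩
    have : ((M * N : _ˣ) : Matrix (Fin 3) (Fin 3) (ZMod p)) i i =
        ∑ k, (M : Matrix (Fin 3) (Fin 3) (ZMod p)) i k *
          (N : Matrix (Fin 3) (Fin 3) (ZMod p)) k i := by
      simp [Matrix.mul_apply]
    rw [this, Finset.sum_eq_single i]
    · rw [hMd i, hNd i, one_mul]
    · intro k _ hk
      rcases lt_or_gt_of_ne hk with h | h
      · rw [hMt (show (id k : Fin 3) < id i from h), zero_mul]
      · rw [hNt (show (id i : Fin 3) < id k from h), mul_zero]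
    · intro h; exact absurd (Finset.mem_univ i) h
  inv_mem' := by
    rintro M ⟨hMt, hMd⟩
    have hcoe : ((M⁻¹ : _ˣ) : Matrix (Fin 3) (Fin 3) (ZMod p)) =
        ((M : Matrix (Fin 3) (Fin 3) (ZMod p)))⁻¹ := (Matrix.coe_units_inv M)
    haveI : Invertible (M : Matrix (Fin 3) (Fin 3) (ZMod p)) := M.invertible
    have hTinv : ((M : Matrix (Fin 3) (Fin 3) (ZMod p))⁻¹).BlockTriangular id :=
      Matrix.blockTriangular_inv_of_blockTriangular hMt
    refine ⟨by rw [hcoe]; exact hTinv, fun i => ?_⟩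
    have hmul : ((M : Matrix (Fin 3) (Fin 3) (ZMod p))⁻¹ *
        (M : Matrix (Fin 3) (Fin 3) (ZMod p))) i i = 1 := by
      rw [Matrix.inv_mul_of_invertible]; exact Matrix.one_apply_eq i
    rw [Matrix.mul_apply, Finset.sum_eq_single i] at hmul
    · rw [hcoe]
      rw [hMd i, mul_one] at hmul
      exact hmul
    · intro k _ hk
      rcases lt_or_gt_of_ne hk with h | h
      · rw [hTinv (show (id k : Fin 3) < id i from h), zero_mul]
      · rw [hMt (show (id i : Fin 3) < id k from h), mul_zero]
    · intro h; exact absurd (Finset.mem_univ i) h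

/-!
Write `x = mk 1 0 0`, `y = mk 0 1 0` and `z = mk 0 0 1`, so that `x * y = y * x * z` with `z`
central, and put `a = y - 1`, `b = x - 1`, `c = z - 1` in `F[H]`. The augmentation ideal `I` is
maximal and nilpotent, so it is the Jacobson radical.

Upper bound: from `b * a = a * b + (1 + a) * (1 + b) * c` every product of `n` elements of `I` is a
combination of monomials `a ^ i * b ^ j * c ^ k` of weight `i + j + 2 * k ≥ n`. As
`a ^ p = b ^ p = c ^ p = 0`, these vanish once the weight exceeds `4 * (p - 1)`.

Lower bound: `c` is, up to a unit, the commutator `b * a - a * b`, hence lies in `I ^ 2`, so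
`a ^ (p - 1) * b ^ (p - 1) * c ^ (p - 1) ∈ I ^ (4 * p - 4)`; it is nonzero because its coefficient
at `y ^ (p - 1) * x ^ (p - 1) * z ^ (p - 1)` is `1`.
-/

lemma loewyLength_eq_succ {A : Type*} [Ring A] {n : ℕ}
    (h : (⊥ : Ideal A).jacobson ^ (n + 1) = ⊥) (h' : (⊥ : Ideal A).jacobson ^ n ≠ ⊥) :
    loewyLength A = n + 1 := by
  refine (Nat.sInf_upward_closed_eq_succ_iff ?_ n).2 ⟨⟨n.succ_pos, h⟩, fun hn => h' hn.2⟩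
  rintro k l hkl ⟨hk, hJ⟩
  exact ⟨hk.trans_le hkl, le_bot_iff.1 ((Ideal.pow_le_pow_right hkl).trans hJ.le)⟩

lemma Ideal.le_jacobson_bot_of_pow_eq_bot {R : Type*} [Ring R] {I : Ideal R} {n : ℕ}
    (h : I ^ n = ⊥) : I ≤ (⊥ : Ideal R).jacobson := by
  intro x hx
  rw [Ideal.mem_jacobson_iff]
  intro y
  have hyx : IsNilpotent (y * x) :=
    ⟨n, by simpa [h] using Ideal.pow_mem_pow (I.mul_mem_left y hx) n⟩
  obtain ⟨u, hu⟩ := hyx.isUnit_add_one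
  refine ⟨↑u⁻¹, ?_⟩
  rw [mul_assoc, ← mul_add_one, ← hu, Units.inv_mul, sub_self]
  exact zero_mem _

section WeightFiltration

variable {K R : Type*} [CommRing K] [Ring R] [Algebra K R] {a b c : R}

/-- The relations satisfied by `a = y - 1`, `b = x - 1`, `c = z - 1` in a group algebra when
`x * y = y * x * z` and `z` commutes with `x` and `y`. -/
structure IsHeisenbergTriple (a b c : R) : Prop where
  commute_ca : Commute c a
  commute_cb : Commute c b
  one_add_mul_one_add : (1 + b) * (1 + a) = (1 + a) * (1 + b) * (1 + c)

lemma IsHeisenbergTriple.b_mul_a_eq (h : IsHeisenbergTriple a b c) :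
    b * a = a * b + (1 + a) * (1 + b) * c := by
  calc b * a = (1 + b) * (1 + a) - 1 - a - b := by noncomm_ring
    _ = a * b + (1 + a) * (1 + b) * c := by rw [h.one_add_mul_one_add]; noncomm_ring

variable (K a b c) in
def weightFiltration (n : ℕ) : Submodule K R :=
  Submodule.span K {x | ∃ i j k, n ≤ i + j + 2 * k ∧ a ^ i * b ^ j * c ^ k = x}

local notation "W" => weightFiltration K a b c

lemma monomial_mem_weightFiltration {n i j k : ℕ} (h : n ≤ i + j + 2 * k) :
    a ^ i * b ^ j * c ^ k ∈ W n :=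
  Submodule.subset_span ⟨i, j, k, h, rfl⟩

lemma weightFiltration_antitone : Antitone (weightFiltration K a b c) := fun _ _ hmn =>
  Submodule.span_mono fun _ ⟨i, j, k, h, hx⟩ => ⟨i, j, k, hmn.trans h, hx⟩

lemma weightFiltration_le_comap {f : R →ₗ[K] R} {m n : ℕ}
    (h : ∀ i j k, m ≤ i + j + 2 * k → f (a ^ i * b ^ j * c ^ k) ∈ W n) :
    W m ≤ (W n).comap f :=
  Submodule.span_le.2 <| by rintro _ ⟨i, j, k, hw, rfl⟩; exact h i j k hw

lemma mul_pow_mem_weightFiltration {r : R} {d : ℕ}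
    (hr : ∀ {n x}, x ∈ W n → x * r ∈ W (n + d)) {n : ℕ} {x : R} (hx : x ∈ W n) (k : ℕ) :
    x * r ^ k ∈ W (n + d * k) := by
  induction k with
  | zero => simpa using hx
  | succ k ih => simpa [pow_succ, ← mul_assoc, mul_add, add_assoc] using hr ih

lemma a_pow_mul_mem_weightFiltration {n : ℕ} {x : R} (hx : x ∈ W n) (i : ℕ) :
    a ^ i * x ∈ W (n + i) :=
  weightFiltration_le_comap (f := LinearMap.mulLeft K (a ^ i)) (fun i' j k hw => by
    simpa [← mul_assoc, ← pow_add] using monomial_mem_weightFiltration (K := K) (by omega)) hx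

lemma mul_c_mem_weightFiltration {n : ℕ} {x : R} (hx : x ∈ W n) : x * c ∈ W (n + 2) :=
  weightFiltration_le_comap (f := LinearMap.mulRight K c) (fun i j k hw => by
    simpa [mul_assoc, ← pow_succ] using monomial_mem_weightFiltration (K := K) (by omega)) hx

lemma mul_b_mem_weightFiltration (hcb : Commute c b) {n : ℕ} {x : R} (hx : x ∈ W n) :
    x * b ∈ W (n + 1) :=
  weightFiltration_le_comap (f := LinearMap.mulRight K b) (fun i j k hw => by
    rw [LinearMap.mulRight_apply, mul_assoc, (hcb.pow_left k).eq, ← mul_assoc, mul_assoc (a ^ i),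
      ← pow_succ]
    exact monomial_mem_weightFiltration (by omega)) hx

lemma IsHeisenbergTriple.b_pow_mul_a_mem_weightFiltration (h : IsHeisenbergTriple a b c)
    (j : ℕ) : b ^ j * a ∈ W (j + 1) := by
  induction j with
  | zero =>
    simpa using (monomial_mem_weightFiltration le_rfl : a ^ 1 * b ^ 0 * c ^ 0 ∈ W (1 + 0 + 2 * 0))
  | succ j ih =>
    have hb := mul_b_mem_weightFiltration h.commute_cb ih
    have hc := mul_c_mem_weightFiltration (c := c) ih
    have hbc := mul_c_mem_weightFiltration (c := c) hb
    have hexpand : b ^ (j + 1) * a = b ^ j * a * b + a ^ 0 * b ^ j * c ^ 1 + b ^ j * a * c +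
        a ^ 0 * b ^ (j + 1) * c ^ 1 + b ^ j * a * b * c := by
      rw [pow_succ, mul_assoc, h.b_mul_a_eq]; noncomm_ring
    rw [hexpand]
    refine add_mem (add_mem (add_mem (add_mem hb ?_) ?_) ?_) ?_
    · exact monomial_mem_weightFiltration (by omega)
    · exact weightFiltration_antitone (by omega) hc
    · exact monomial_mem_weightFiltration (by omega)
    · exact weightFiltration_antitone (by omega) hbc

lemma IsHeisenbergTriple.mul_a_mem_weightFiltration (h : IsHeisenbergTriple a b c) {n : ℕ}
    {x : R} (hx : x ∈ W n) : x * a ∈ W (n + 1) := by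
  refine weightFiltration_le_comap (f := LinearMap.mulRight K a) (fun i j k hw => ?_) hx
  have hmem := a_pow_mul_mem_weightFiltration (mul_pow_mem_weightFiltration
    mul_c_mem_weightFiltration (h.b_pow_mul_a_mem_weightFiltration (K := K) j) k) i
  rw [LinearMap.mulRight_apply, mul_assoc, (h.commute_ca.pow_left k).eq, ← mul_assoc,
    mul_assoc (a ^ i), mul_assoc]
  exact weightFiltration_antitone (by omega) hmem

lemma IsHeisenbergTriple.weightFiltration_mul_le (h : IsHeisenbergTriple a b c) (m n : ℕ) :
    W m * W n ≤ W (m + n) :=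
  Submodule.mul_le.2 fun x hx _ hy => weightFiltration_le_comap (f := LinearMap.mulLeft K x)
    (fun i j k hw => by
      have hmem := mul_pow_mem_weightFiltration mul_c_mem_weightFiltration
        (mul_pow_mem_weightFiltration (mul_b_mem_weightFiltration h.commute_cb)
          (mul_pow_mem_weightFiltration h.mul_a_mem_weightFiltration hx i) j) k
      rw [LinearMap.mulLeft_apply, ← mul_assoc, ← mul_assoc]
      exact weightFiltration_antitone (by omega) hmem) hy

lemma IsHeisenbergTriple.restrictScalars_pow_le_weightFiltration (h : IsHeisenbergTriple a b c)
    {I : Ideal R} (hI : I.restrictScalars K ≤ W 1) (n : ℕ) :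
    (I ^ (n + 1)).restrictScalars K ≤ W (n + 1) := by
  induction n with
  | zero => rwa [Submodule.pow_one]
  | succ n ih =>
    rw [Submodule.pow_succ, Submodule.restrictScalars_mul]
    exact (mul_le_mul' ih hI).trans (h.weightFiltration_mul_le _ _)

lemma weightFiltration_eq_bot {p : ℕ} (ha : a ^ p = 0) (hb : b ^ p = 0) (hc : c ^ p = 0) :
    W (4 * p - 3) = ⊥ := by
  refine (Submodule.span_eq_bot).2 ?_
  rintro _ ⟨i, j, k, hw, rfl⟩
  rcases (by omega : p ≤ i ∨ p ≤ j ∨ p ≤ k) with hi | hj | hk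
  · rw [pow_eq_zero_of_le hi ha, zero_mul, zero_mul]
  · rw [pow_eq_zero_of_le hj hb, mul_zero, zero_mul]
  · rw [pow_eq_zero_of_le hk hc, mul_zero]

lemma IsHeisenbergTriple.one_add_pow_mul_sub_one_mem_weightFiltration
    (h : IsHeisenbergTriple a b c) (i j k : ℕ) :
    (1 + a) ^ i * (1 + b) ^ j * (1 + c) ^ k - 1 ∈ W 1 := by
  have hmul : ∀ {u v : R}, u - 1 ∈ W 1 → v - 1 ∈ W 1 → u * v - 1 ∈ W 1 := fun hu hv => by
    have huv := weightFiltration_antitone (show 1 ≤ 1 + 1 by norm_num)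
      (h.weightFiltration_mul_le 1 1 (Submodule.mul_mem_mul hu hv))
    simpa [mul_sub, sub_mul, add_sub_assoc] using add_mem (add_mem huv hu) hv
  have hpow : ∀ {u : R} (n : ℕ), u - 1 ∈ W 1 → u ^ n - 1 ∈ W 1 := fun n hu => by
    induction n with
    | zero => simp
    | succ n ih => rw [pow_succ]; exact hmul ih hu
  have hgen : ∀ i' j' k', 1 ≤ i' + j' + 2 * k' → 1 + a ^ i' * b ^ j' * c ^ k' - 1 ∈ W 1 :=
    fun i' j' k' hw => by simpa using monomial_mem_weightFiltration (K := K) hw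
  simpa using hmul (hmul (hpow i (hgen 1 0 0 le_rfl)) (hpow j (hgen 0 1 0 le_rfl)))
    (hpow k (hgen 0 0 1 (by norm_num)))

lemma IsHeisenbergTriple.monomial_mem_pow (h : IsHeisenbergTriple a b c) {I : Ideal R}
    [I.IsTwoSided] (ha : a ∈ I) (hb : b ∈ I) (hu : IsUnit ((1 + a) * (1 + b))) (i j k : ℕ) :
    a ^ i * b ^ j * c ^ k ∈ I ^ (i + j + 2 * k) := by
  obtain ⟨u, hu⟩ := hu
  have hc_eq : c = (↑u⁻¹ * b) * a - (↑u⁻¹ * a) * b := by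
    calc c = ↑u⁻¹ * (↑u * c) := by rw [← mul_assoc, Units.inv_mul, one_mul]
      _ = ↑u⁻¹ * (b * a - a * b) := by rw [hu, h.b_mul_a_eq]; noncomm_ring
      _ = _ := by noncomm_ring
  have hc : c ∈ I ^ 2 := by
    rw [Submodule.pow_succ, Submodule.pow_one, hc_eq]
    exact sub_mem (Ideal.mul_mem_mul (I.mul_mem_left _ hb) ha)
      (Ideal.mul_mem_mul (I.mul_mem_left _ ha) hb)
  have hck : ∀ k, c ^ k ∈ I ^ (2 * k) := fun k => by
    induction k with
    | zero => simp [Submodule.pow_zero]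
    | succ k ih =>
      rw [pow_succ, mul_add, mul_one, Ideal.IsTwoSided.pow_add]
      exact Ideal.mul_mem_mul ih hc
  rw [Ideal.IsTwoSided.pow_add, Ideal.IsTwoSided.pow_add]
  exact Ideal.mul_mem_mul
    (Ideal.mul_mem_mul (Ideal.pow_mem_pow ha i) (Ideal.pow_mem_pow hb j)) (hck k)

end WeightFiltration

namespace MonoidAlgebra

section

open Finset

variable {k G : Type*} [CommRing k] [Monoid G]

variable (k G) in
noncomputable def augmentationIdeal : Ideal (MonoidAlgebra k G) :=
  RingHom.ker (lift k k G 1)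

instance : (augmentationIdeal k G).IsTwoSided :=
  inferInstanceAs (RingHom.ker _).IsTwoSided

lemma of_sub_one_mem_augmentationIdeal (g : G) : of k G g - 1 ∈ augmentationIdeal k G := by
  simp [augmentationIdeal]

lemma augmentationIdeal_le_span :
    (augmentationIdeal k G).restrictScalars k ≤
      Submodule.span k (Set.range fun g => of k G g - 1) := by
  have key : ∀ x : MonoidAlgebra k G, x - algebraMap k _ (lift k k G 1 x) ∈
      Submodule.span k (Set.range fun g => of k G g - 1) := fun x => by
    induction x using MonoidAlgebra.induction_on with
    | of g => simpa [one_def] using Submodule.subset_span (Set.mem_range_self g)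
    | add x y hx hy => simpa [add_sub_add_comm] using add_mem hx hy
    | smul r x hx =>
      rw [map_smul, smul_eq_mul, map_mul, ← Algebra.smul_def, ← smul_sub]
      exact Submodule.smul_mem _ r hx
  intro x hx
  simpa [(RingHom.mem_ker).1 hx] using key x

lemma isMaximal_augmentationIdeal {k : Type*} [Field k] : (augmentationIdeal k G).IsMaximal :=
  RingHom.ker_isMaximal_of_surjective _ fun r => ⟨algebraMap k _ r, by simp⟩

lemma jacobson_bot_eq_augmentationIdeal {k : Type*} [Field k] {n : ℕ}
    (h : augmentationIdeal k G ^ n = ⊥) :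
    (⊥ : Ideal (MonoidAlgebra k G)).jacobson = augmentationIdeal k G :=
  le_antisymm (sInf_le ⟨bot_le, isMaximal_augmentationIdeal⟩)
    (Ideal.le_jacobson_bot_of_pow_eq_bot h)

lemma of_sub_one_pow (g : G) (n : ℕ) :
    (of k G g - 1) ^ n =
      ∑ m ∈ range (n + 1), single (g ^ m) ((-1) ^ (n - m) * (n.choose m : k)) := by
  rw [sub_eq_add_neg, (Commute.neg_one_right _).add_pow]
  refine sum_congr rfl fun m _ => ?_
  have hscalar : (-1 : MonoidAlgebra k G) ^ (n - m) * (n.choose m : MonoidAlgebra k G) =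
      single 1 ((-1 : k) ^ (n - m) * n.choose m) := by
    change _ = algebraMap k (MonoidAlgebra k G) ((-1 : k) ^ (n - m) * n.choose m)
    rw [map_mul, map_pow, map_neg, map_one, map_natCast]
  rw [mul_assoc, hscalar, of_apply, single_pow, single_mul_single, one_pow, one_mul, mul_one]

lemma coeff_of_sub_one_pow_mul_of_sub_one_pow_mul_of_sub_one_pow (g₁ g₂ g₃ : G) (n : ℕ)
    (hinj : ∀ i ≤ n, ∀ j ≤ n, ∀ l ≤ n, g₁ ^ i * g₂ ^ j * g₃ ^ l = g₁ ^ n * g₂ ^ n * g₃ ^ n →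
      i = n ∧ j = n ∧ l = n) :
    ((of k G g₁ - 1) ^ n * (of k G g₂ - 1) ^ n * (of k G g₃ - 1) ^ n).coeff
      (g₁ ^ n * g₂ ^ n * g₃ ^ n) = 1 := by
  classical
  simp only [of_sub_one_pow, sum_mul, mul_sum, single_mul_single, coeff_sum,
    Finsupp.finsetSum_apply, coeff_single, Finsupp.single_apply]
  have hcond : ∀ l ∈ range (n + 1), ∀ j ∈ range (n + 1), ∀ i ∈ range (n + 1),
      g₁ ^ i * g₂ ^ j * g₃ ^ l = g₁ ^ n * g₂ ^ n * g₃ ^ n ↔ l = n ∧ j = n ∧ i = n := by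
    intro l hl j hj i hi
    refine ⟨fun h => ?_, by rintro ⟨rfl, rfl, rfl⟩; rfl⟩
    obtain ⟨rfl, rfl, rfl⟩ := hinj i (mem_range_succ_iff.1 hi) j (mem_range_succ_iff.1 hj) l
      (mem_range_succ_iff.1 hl) h
    exact ⟨rfl, rfl, rfl⟩
  rw [sum_congr rfl fun l hl => sum_congr rfl fun j hj => sum_congr rfl fun i hi =>
    if_congr (hcond l hl j hj i hi) rfl rfl]
  simp [ite_and]

lemma isHeisenbergTriple_of_sub_one {x y z : G} (hzy : Commute z y) (hzx : Commute z x)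
    (h : x * y = y * x * z) :
    IsHeisenbergTriple (of k G y - 1) (of k G x - 1) (of k G z - 1) where
  commute_ca := ((hzy.map (of k G)).sub_right (.one_right _)).sub_left (.one_left _)
  commute_cb := ((hzx.map (of k G)).sub_right (.one_right _)).sub_left (.one_left _)
  one_add_mul_one_add := by simp only [add_sub_cancel, ← map_mul, h]

end

lemma of_sub_one_pow_char_eq_zero {k G : Type*} [CommRing k] [Monoid G] {p : ℕ} [Fact p.Prime]
    [CharP k p] {g : G} (hg : g ^ p = 1) : (of k G g - 1) ^ p = 0 := by
  have := charP_of_injective_algebraMap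
    (FaithfulSMul.algebraMap_injective k (MonoidAlgebra k G)) p
  rw [sub_pow_char_of_commute _ (Commute.one_right _), ← map_pow, hg, map_one, one_pow,
    sub_self]

end MonoidAlgebra

open MonoidAlgebra

namespace unitriangular3

variable {p : ℕ}

def mk (α β γ : ZMod p) : unitriangular3 p :=
  ⟨⟨!![1, α, γ; 0, 1, β; 0, 0, 1], !![1, -α, α * β - γ; 0, 1, -β; 0, 0, 1],
      by simp [Matrix.one_fin_three], by simp [Matrix.one_fin_three]; ring⟩,
    fun i j hij => by fin_cases i <;> fin_cases j <;> simp_all,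
    fun i => by fin_cases i <;> simp⟩

lemma coe_mk (α β γ : ZMod p) :
    ((mk α β γ : (Matrix (Fin 3) (Fin 3) (ZMod p))ˣ) : Matrix (Fin 3) (Fin 3) (ZMod p)) =
      !![1, α, γ; 0, 1, β; 0, 0, 1] := rfl

lemma mk_mul (α β γ α' β' γ' : ZMod p) :
    mk α β γ * mk α' β' γ' = mk (α + α') (β + β') (γ + γ' + α * β') := by
  refine Subtype.ext (Units.ext ?_)
  simp only [Subgroup.coe_mul, Units.val_mul, coe_mk, Matrix.mul_fin_three]
  ring_nf

lemma mk_zero : mk 0 0 0 = (1 : unitriangular3 p) :=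
  Subtype.ext (Units.ext (by simp [coe_mk, Matrix.one_fin_three]))

lemma mk_inj {α β γ α' β' γ' : ZMod p} :
    mk α β γ = mk α' β' γ' ↔ α = α' ∧ β = β' ∧ γ = γ' := by
  refine ⟨fun h => ?_, by rintro ⟨rfl, rfl, rfl⟩; rfl⟩
  have hM := congrArg (fun g : unitriangular3 p =>
    ((g : (Matrix (Fin 3) (Fin 3) (ZMod p))ˣ) : Matrix (Fin 3) (Fin 3) (ZMod p))) h
  simp only [coe_mk] at hM
  exact ⟨by simpa using congrFun (congrFun hM 0) 1, by simpa using congrFun (congrFun hM 1) 2,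
    by simpa using congrFun (congrFun hM 0) 2⟩

lemma exists_eq_mk (g : unitriangular3 p) : ∃ α β γ : ZMod p, g = mk α β γ := by
  obtain ⟨M, hM, hdiag⟩ := g
  refine ⟨(M : Matrix (Fin 3) (Fin 3) (ZMod p)) 0 1, (M : Matrix (Fin 3) (Fin 3) (ZMod p)) 1 2,
    (M : Matrix (Fin 3) (Fin 3) (ZMod p)) 0 2, Subtype.ext (Units.ext ?_)⟩
  ext i j
  fin_cases i <;> fin_cases j <;> first | exact hdiag _ | exact hM (by decide) | rfl

lemma mk_pow (α β γ : ZMod p) (n : ℕ) :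
    mk α β γ ^ n = mk ((n : ZMod p) * α) (n * β) (n * γ + (n.choose 2 : ℕ) * α * β) := by
  induction n with
  | zero => simpa using mk_zero.symm
  | succ n ih =>
    rw [pow_succ, ih, mk_mul, Nat.choose_succ_succ', Nat.choose_one_right]
    congr 1 <;> push_cast <;> ring

lemma mk_pow_mul_mk_pow_mul_mk_pow (i j k : ℕ) :
    mk 0 1 0 ^ i * mk 1 0 0 ^ j * mk 0 0 1 ^ k = (mk j i k : unitriangular3 p) := by
  simp [mk_pow, mk_mul]

lemma mk_pow_char_eq_one (α β γ : ZMod p) (hαβ : α * β = 0) : mk α β γ ^ p = 1 := by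
  simp [mk_pow, hαβ, mul_assoc, mk_zero]

lemma mk_one_zero_zero_mul_mk_zero_one_zero :
    mk 1 0 0 * mk 0 1 0 = (mk 0 1 0 * mk 1 0 0 * mk 0 0 1 : unitriangular3 p) := by
  simp [mk_mul]

lemma commute_mk_zero_zero (γ : ZMod p) (g : unitriangular3 p) : Commute (mk 0 0 γ) g := by
  obtain ⟨α, β, γ', rfl⟩ := exists_eq_mk g
  simp only [Commute, SemiconjBy, mk_mul]
  congr 1 <;> ring
variable (k : Type*) [CommRing k]

local notation "𝔞" => of k (unitriangular3 p) (mk 0 1 0) - 1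
local notation "𝔟" => of k (unitriangular3 p) (mk 1 0 0) - 1
local notation "𝔠" => of k (unitriangular3 p) (mk 0 0 1) - 1

lemma isHeisenbergTriple : IsHeisenbergTriple 𝔞 𝔟 𝔠 :=
  isHeisenbergTriple_of_sub_one (commute_mk_zero_zero 1 _) (commute_mk_zero_zero 1 _)
    mk_one_zero_zero_mul_mk_zero_one_zero

lemma augmentationIdeal_le_weightFiltration [NeZero p] :
    (augmentationIdeal k (unitriangular3 p)).restrictScalars k ≤ weightFiltration k 𝔞 𝔟 𝔠 1 := by
  refine augmentationIdeal_le_span.trans (Submodule.span_le.2 ?_)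
  rintro _ ⟨g, rfl⟩
  obtain ⟨α, β, γ, rfl⟩ := exists_eq_mk g
  simpa [← map_pow, ← map_mul, mk_pow_mul_mk_pow_mul_mk_pow] using
    (isHeisenbergTriple (p := p) k).one_add_pow_mul_sub_one_mem_weightFiltration (K := k)
      β.val α.val γ.val

lemma augmentationIdeal_pow_eq_bot [Fact p.Prime] [CharP k p] :
    augmentationIdeal k (unitriangular3 p) ^ (4 * p - 3) = ⊥ := by
  have hW : weightFiltration k 𝔞 𝔟 𝔠 (4 * p - 3) = ⊥ := weightFiltration_eq_bot
    (of_sub_one_pow_char_eq_zero (mk_pow_char_eq_one 0 1 0 (zero_mul _)))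
    (of_sub_one_pow_char_eq_zero (mk_pow_char_eq_one 1 0 0 (mul_zero _)))
    (of_sub_one_pow_char_eq_zero (mk_pow_char_eq_one 0 0 1 (mul_zero _)))
  obtain ⟨n, hn⟩ : ∃ n, 4 * p - 3 = n + 1 :=
    ⟨4 * p - 4, by have := (Fact.out : p.Prime).two_le; omega⟩
  have hle := (isHeisenbergTriple (p := p) k).restrictScalars_pow_le_weightFiltration
    (augmentationIdeal_le_weightFiltration k) n
  rwa [← hn, hW, le_bot_iff, Submodule.restrictScalars_eq_bot_iff] at hle

lemma pow_mul_pow_mul_pow_ne_zero [NeZero p] [Nontrivial k] :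
    𝔞 ^ (p - 1) * 𝔟 ^ (p - 1) * 𝔠 ^ (p - 1) ≠ 0 := by
  have hcast : ∀ {m : ℕ}, m ≤ p - 1 → (m : ZMod p) = (p - 1 : ℕ) → m = p - 1 := fun hm h => by
    have := NeZero.pos p
    rwa [ZMod.natCast_eq_natCast_iff', Nat.mod_eq_of_lt (by omega), Nat.mod_eq_of_lt (by omega)]
      at h
  intro h0
  have hcoeff := coeff_of_sub_one_pow_mul_of_sub_one_pow_mul_of_sub_one_pow (k := k)
    (mk 0 1 0 : unitriangular3 p) (mk 1 0 0) (mk 0 0 1) (p - 1) fun i hi j hj l hl h => by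
      simp only [mk_pow_mul_mk_pow_mul_mk_pow, mk_inj] at h
      exact ⟨hcast hi h.2.1, hcast hj h.1, hcast hl h.2.2⟩
  rw [h0] at hcoeff
  simp at hcoeff

lemma augmentationIdeal_pow_ne_bot [NeZero p] [Nontrivial k] :
    augmentationIdeal k (unitriangular3 p) ^ (4 * p - 4) ≠ ⊥ := by
  intro hbot
  have hu : IsUnit ((1 + 𝔞) * (1 + 𝔟)) := by
    simp only [add_sub_cancel]
    exact ((Group.isUnit _).map _).mul ((Group.isUnit _).map _)
  have hmem := (isHeisenbergTriple (p := p) k).monomial_mem_pow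
    (of_sub_one_mem_augmentationIdeal _) (of_sub_one_mem_augmentationIdeal _) hu
    (p - 1) (p - 1) (p - 1)
  rw [show p - 1 + (p - 1) + 2 * (p - 1) = 4 * p - 4 by omega, hbot] at hmem
  exact pow_mul_pow_mul_pow_ne_zero k hmem

end unitriangular3

theorem loewyLength_groupAlgebra_unitriangular3_general (p : ℕ) (hp : p.Prime)
    (F : Type*) [Field F] [CharP F p] :
    loewyLength (MonoidAlgebra F (unitriangular3 p)) = 4 * p - 3 ∧
      3 * p - 2 < 4 * p - 3 ∧ rho p 3 1 = 3 * p - 2 := by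
  have := Fact.mk hp
  have hp2 := hp.two_le
  have hnil := unitriangular3.augmentationIdeal_pow_eq_bot (p := p) F
  have hJ := MonoidAlgebra.jacobson_bot_eq_augmentationIdeal hnil
  refine ⟨?_, by omega, by simp [rho]; omega⟩
  rw [show 4 * p - 3 = 4 * p - 4 + 1 by omega] at hnil ⊢
  exact loewyLength_eq_succ (hJ ▸ hnil) (hJ ▸ unitriangular3.augmentationIdeal_pow_ne_bot F)

theorem loewyLength_groupAlgebra_unitriangular3 (p : ℕ) (hp : p.Prime) (hodd : Odd p)
    (F : Type*) [Field F] [CharP F p] :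
    loewyLength (MonoidAlgebra F (unitriangular3 p)) = 4 * p - 3 ∧
      3 * p - 2 < 4 * p - 3 ∧ rho p 3 1 = 3 * p - 2 :=
  loewyLength_groupAlgebra_unitriangular3_general p hp F
end
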